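/- arXiv:2205.11638 — 4 statements merged into one kernel-verified Lean document; each statement's English description precedes it below -/
import Mathlib

section
/- Damped min-marginal subtraction does not decrease the subproblem energy: let X ⊆ {0,1}^n be finite, λ ∈ ℝ^n, and i ∈ [n] such that both {x ∈ X : x_i = 0} and {x ∈ X : x_i = 1} are nonempty. Let m^β_i(λ) = min_{x∈X, x_i=β} ⟨λ, x⟩ for β ∈ {0,1}, and for ω ∈ [0,1] define λ' = λ − ω·(m^1_i(λ) − m^0_i(λ))·e_i, where e_i is the i-th standard basis vector. Then E_X(λ') ≥ E_X(λ). -/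
open Finset

/-- The subproblem energy `E_X(λ) = min_{x∈X} ⟨λ,x⟩`. -/
noncomputable def energy {n : ℕ} (X : Finset (Fin n → ℝ)) (hX : X.Nonempty)
    (lam : Fin n → ℝ) : ℝ :=
  X.inf' hX (fun x => ∑ k, lam k * x k)

/-- The min-marginal `m^β_i(λ) = min_{x∈X, x_i=β} ⟨λ,x⟩`. -/
noncomputable def minMarginal {n : ℕ} (X : Finset (Fin n → ℝ)) (i : Fin n) (β : ℝ)
    (h : (X.filter fun x => x i = β).Nonempty) (lam : Fin n → ℝ) : ℝ :=
  (X.filter fun x => x i = β).inf' h (fun x => ∑ k, lam k * x k)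

/-- Damped min-marginal subtraction does not decrease the subproblem energy:
for binary `X`, `ω ∈ [0,1]` and `λ' = λ − ω (m¹_i(λ) − m⁰_i(λ)) e_i`, one has
`E_X(λ') ≥ E_X(λ)`. -/
theorem damped_minmarginal_subtraction_monotone
    (n : ℕ) (X : Finset (Fin n → ℝ)) (hX : X.Nonempty)
    (hbin : ∀ x ∈ X, ∀ k, x k = 0 ∨ x k = 1)
    (lam : Fin n → ℝ) (i : Fin n)
    (h0 : (X.filter fun x => x i = 0).Nonempty)
    (h1 : (X.filter fun x => x i = 1).Nonempty)
    (ω : ℝ) (hω0 : 0 ≤ ω) (hω1 : ω ≤ 1) :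
    energy X hX lam ≤
      energy X hX
        (lam - (ω * (minMarginal X i 1 h1 lam - minMarginal X i 0 h0 lam)) • (Pi.single i 1 : Fin n → ℝ)) := by
  set m0 := minMarginal X i 0 h0 lam with hm0
  set m1 := minMarginal X i 1 h1 lam with hm1
  set δ := ω * (m1 - m0) with hδ
  set E := energy X hX lam with hE
  -- E ≤ m0 and E ≤ m1
  obtain ⟨x0, hx0mem, hx0⟩ := Finset.exists_mem_eq_inf' h0 (fun x => ∑ k, lam k * x k)
  obtain ⟨x1, hx1mem, hx1⟩ := Finset.exists_mem_eq_inf' h1 (fun x => ∑ k, lam k * x k)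
  have hEm0 : E ≤ m0 := by
    rw [hm0, minMarginal, hx0]
    exact Finset.inf'_le _ (Finset.mem_filter.mp hx0mem).1
  have hEm1 : E ≤ m1 := by
    rw [hm1, minMarginal, hx1]
    exact Finset.inf'_le _ (Finset.mem_filter.mp hx1mem).1
  rw [energy]
  apply Finset.le_inf'
  intro x hx
  have hsum : ∑ k, (lam - δ • (Pi.single i 1 : Fin n → ℝ)) k * x k
      = (∑ k, lam k * x k) - δ * x i := by
    have h1' : ∑ k, (lam - δ • (Pi.single i 1 : Fin n → ℝ)) k * x k
        = ∑ k, (lam k * x k - δ * (Pi.single i 1 : Fin n → ℝ) k * x k) := by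
      apply Finset.sum_congr rfl
      intro k _
      simp [sub_mul, mul_assoc]
    rw [h1', Finset.sum_sub_distrib]
    congr 1
    rw [Finset.sum_eq_single i]
    · simp
    · intro b _ hb; simp [Pi.single_eq_of_ne hb]
    · intro h; exact absurd (Finset.mem_univ i) h
  rw [hsum]
  rcases hbin x hx i with hxi | hxi
  · rw [hxi]
    simp only [mul_zero, sub_zero]
    rw [hE, energy]
    exact Finset.inf'_le _ hx
  · rw [hxi, mul_one]
    have hm1x : m1 ≤ ∑ k, lam k * x k := by
      rw [hm1, minMarginal]
      exact Finset.inf'_le _ (Finset.mem_filter.mpr ⟨hx, hxi⟩)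
    have h1ω : 0 ≤ 1 - ω := by linarith
    nlinarith [mul_le_mul_of_nonneg_left hEm0 hω0, mul_le_mul_of_nonneg_left hEm1 h1ω, mul_le_mul_of_nonneg_left hm1x h1ω]
end

section
/- Lifted damped min-marginal subtraction preserves the lifted energy: let X ⊆ {0,1}^n be finite, λ^1, λ^0 ∈ ℝ^n, and i ∈ [n] such that both {x ∈ X : x_i = 0} and {x ∈ X : x_i = 1} are nonempty. Let m^β = min_{x∈X, x_i=β} (⟨λ^1, x⟩ + ⟨λ^0, 1−x⟩) for β ∈ {0,1}, ω ∈ [0,1], and M = ω·(m^1 − m^0). Define λ'^1 = λ^1 − max(M, 0)·e_i and λ'^0 = λ^0 − max(−M, 0)·e_i. Then E_X(λ'^1, λ'^0) = E_X(λ^1, λ^0). -/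
/-!
Splitting `X` according to `x i`, the lifted energy is `min m⁰ m¹`. Subtracting
`a • e_i` from `λ¹` and `b • e_i` from `λ⁰` lowers the cost of every `x` with `x i = β` by the
same constant `a β + b (1 - β)`, so the two slice minima become `m⁰ - max (-M) 0` and
`m¹ - max M 0`. Since `M = ω (m¹ - m⁰)` lies between `0` and `m¹ - m⁰`, only the larger slice
minimum moves, and not below the smaller one: the minimum is unchanged.
-/

open Finset

/-- The lifted energy `E_X(λ¹, λ⁰) = min_{x∈X} (⟨λ¹,x⟩ + ⟨λ⁰,1−x⟩)`. -/
noncomputable def liftedEnergy {n : ℕ} (X : Finset (Fin n → ℝ)) (hX : X.Nonempty)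
    (lam1 lam0 : Fin n → ℝ) : ℝ :=
  X.inf' hX (fun x => ∑ k, (lam1 k * x k + lam0 k * (1 - x k)))

/-- The lifted min-marginal `m^β = min_{x∈X, x_i=β} (⟨λ¹,x⟩ + ⟨λ⁰,1−x⟩)`. -/
noncomputable def liftedMinMarginal {n : ℕ} (X : Finset (Fin n → ℝ)) (i : Fin n) (β : ℝ)
    (h : (X.filter fun x => x i = β).Nonempty) (lam1 lam0 : Fin n → ℝ) : ℝ :=
  (X.filter fun x => x i = β).inf' h (fun x => ∑ k, (lam1 k * x k + lam0 k * (1 - x k)))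

theorem Finset.inf'_eq_inf'_filter_inf_inf'_filter {α β : Type*} [SemilatticeInf α]
    {s : Finset β} (hs : s.Nonempty) (p q : β → Prop) [DecidablePred p] [DecidablePred q]
    (hp : (s.filter p).Nonempty) (hq : (s.filter q).Nonempty) (hpq : ∀ x ∈ s, p x ∨ q x)
    (f : β → α) :
    s.inf' hs f = (s.filter p).inf' hp f ⊓ (s.filter q).inf' hq f := by
  classical
  rw [← inf'_union hp hq]
  refine inf'_congr hs ?_ fun _ _ => rfl
  ext x
  simp only [mem_union, mem_filter]
  grind

theorem Finset.inf'_sub_const {α β : Type*} [AddGroup α] [SemilatticeInf α] [AddRightMono α]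
    {s : Finset β} (hs : s.Nonempty) (f : β → α) (c : α) :
    s.inf' hs (fun x => f x - c) = s.inf' hs f - c :=
  (map_finset_inf' (OrderIso.subRight c) hs f).symm

theorem min_sub_max_damped_eq_min {m₀ m₁ ω : ℝ} (hω0 : 0 ≤ ω) (hω1 : ω ≤ 1) :
    min (m₀ - max (-(ω * (m₁ - m₀))) 0) (m₁ - max (ω * (m₁ - m₀)) 0) = min m₀ m₁ := by
  rcases le_total m₀ m₁ with h | h
  · have hM : ω * (m₁ - m₀) ≤ m₁ - m₀ := mul_le_of_le_one_left (by linarith) hω1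
    have hM0 : 0 ≤ ω * (m₁ - m₀) := mul_nonneg hω0 (by linarith)
    rw [max_eq_right (by linarith), max_eq_left hM0, min_eq_left h, min_eq_left (by linarith)]
    ring
  · have hM : m₁ - m₀ ≤ ω * (m₁ - m₀) := by nlinarith
    have hM0 : ω * (m₁ - m₀) ≤ 0 := mul_nonpos_of_nonneg_of_nonpos hω0 (by linarith)
    rw [max_eq_left (by linarith), max_eq_right hM0, min_eq_right h, min_eq_right (by linarith)]
    ring

section Lifted

variable {n : ℕ}

noncomputable def liftedCost (lam1 lam0 x : Fin n → ℝ) : ℝ :=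
  ∑ k, (lam1 k * x k + lam0 k * (1 - x k))

theorem liftedCost_sub (lam1 lam0 mu1 mu0 x : Fin n → ℝ) :
    liftedCost (lam1 - mu1) (lam0 - mu0) x = liftedCost lam1 lam0 x - liftedCost mu1 mu0 x := by
  rw [liftedCost, liftedCost, liftedCost, ← sum_sub_distrib]
  exact sum_congr rfl fun k _ => by simp only [Pi.sub_apply]; ring

theorem liftedCost_smul_single (i : Fin n) (a b : ℝ) (x : Fin n → ℝ) :
    liftedCost (a • Pi.single i 1) (b • Pi.single i 1) x = a * x i + b * (1 - x i) := by
  rw [liftedCost, sum_eq_single i (fun k _ hk => by simp [hk]) (by simp)]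
  simp

theorem liftedMinMarginal_sub_smul_single (X : Finset (Fin n → ℝ)) (i : Fin n) (β : ℝ)
    (h : (X.filter fun x => x i = β).Nonempty) (lam1 lam0 : Fin n → ℝ) (a b : ℝ) :
    liftedMinMarginal X i β h (lam1 - a • Pi.single i 1) (lam0 - b • Pi.single i 1)
      = liftedMinMarginal X i β h lam1 lam0 - (a * β + b * (1 - β)) := by
  change (X.filter fun x => x i = β).inf' h (liftedCost _ _)
    = (X.filter fun x => x i = β).inf' h (liftedCost lam1 lam0) - _
  rw [← inf'_sub_const]
  refine inf'_congr h rfl fun x hx => ?_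
  rw [liftedCost_sub, liftedCost_smul_single, (mem_filter.1 hx).2]

theorem liftedEnergy_eq_min_liftedMinMarginal (X : Finset (Fin n → ℝ)) (hX : X.Nonempty)
    (i : Fin n) (hbin : ∀ x ∈ X, x i = 0 ∨ x i = 1)
    (h0 : (X.filter fun x => x i = 0).Nonempty) (h1 : (X.filter fun x => x i = 1).Nonempty)
    (lam1 lam0 : Fin n → ℝ) :
    liftedEnergy X hX lam1 lam0
      = min (liftedMinMarginal X i 0 h0 lam1 lam0) (liftedMinMarginal X i 1 h1 lam1 lam0) :=
  inf'_eq_inf'_filter_inf_inf'_filter hX _ _ h0 h1 hbin _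

end Lifted

set_option maxHeartbeats 1000000 in
/-- Lifted damped min-marginal subtraction preserves the lifted energy:
with `M = ω (m¹ − m⁰)`, `λ'¹ = λ¹ − max(M,0) e_i` and `λ'⁰ = λ⁰ − max(−M,0) e_i`,
one has `E_X(λ'¹, λ'⁰) = E_X(λ¹, λ⁰)`. -/
theorem lifted_damped_subtraction_preserves_energy
    (n : ℕ) (X : Finset (Fin n → ℝ)) (hX : X.Nonempty)
    (hbin : ∀ x ∈ X, ∀ k, x k = 0 ∨ x k = 1)
    (lam1 lam0 : Fin n → ℝ) (i : Fin n)
    (h0 : (X.filter fun x => x i = 0).Nonempty)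
    (h1 : (X.filter fun x => x i = 1).Nonempty)
    (ω : ℝ) (hω0 : 0 ≤ ω) (hω1 : ω ≤ 1) :
    liftedEnergy X hX
        (lam1 - (max (ω * (liftedMinMarginal X i 1 h1 lam1 lam0
            - liftedMinMarginal X i 0 h0 lam1 lam0)) 0) • (Pi.single i 1 : Fin n → ℝ))
        (lam0 - (max (-(ω * (liftedMinMarginal X i 1 h1 lam1 lam0
            - liftedMinMarginal X i 0 h0 lam1 lam0))) 0) • (Pi.single i 1 : Fin n → ℝ))
      = liftedEnergy X hX lam1 lam0 := by
  have hbin_i : ∀ x ∈ X, x i = 0 ∨ x i = 1 := fun x hx => hbin x hx i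
  rw [liftedEnergy_eq_min_liftedMinMarginal X hX i hbin_i h0 h1,
    liftedMinMarginal_sub_smul_single, liftedMinMarginal_sub_smul_single,
    liftedEnergy_eq_min_liftedMinMarginal X hX i hbin_i h0 h1]
  simpa using min_sub_max_damped_eq_min hω0 hω1
end

section
/- Monotonicity of the lifted block update: let X ⊆ {0,1}^n be finite, λ^1, λ^0 ∈ ℝ^n, and i ∈ [n] such that both {x ∈ X : x_i = 0} and {x ∈ X : x_i = 1} are nonempty. Let m^β = min_{x∈X, x_i=β} (⟨λ^1, x⟩ + ⟨λ^0, 1−x⟩), ω ∈ [0,1], M = ω·(m^1 − m^0), and let δ^1, δ^0 ∈ ℝ^n satisfy δ^1 ≥ 0 and δ^0 ≥ 0 componentwise. Then E_X(λ^1 − max(M,0)·e_i + δ^1, λ^0 − max(−M,0)·e_i + δ^0) ≥ E_X(λ^1, λ^0). -/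
open Finset

set_option maxHeartbeats 2000000 in
/-- Monotonicity of the lifted block update: with `M = ω (m¹ − m⁰)` and
nonnegative `δ¹, δ⁰`, one has
`E_X(λ¹ − max(M,0) e_i + δ¹, λ⁰ − max(−M,0) e_i + δ⁰) ≥ E_X(λ¹, λ⁰)`. -/
theorem lifted_block_update_monotone
    (n : ℕ) (X : Finset (Fin n → ℝ)) (hX : X.Nonempty)
    (hbin : ∀ x ∈ X, ∀ k, x k = 0 ∨ x k = 1)
    (lam1 lam0 : Fin n → ℝ) (i : Fin n)
    (h0 : (X.filter fun x => x i = 0).Nonempty)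
    (h1 : (X.filter fun x => x i = 1).Nonempty)
    (ω : ℝ) (hω0 : 0 ≤ ω) (hω1 : ω ≤ 1)
    (δ1 δ0 : Fin n → ℝ) (hδ1 : ∀ k, 0 ≤ δ1 k) (hδ0 : ∀ k, 0 ≤ δ0 k) :
    liftedEnergy X hX lam1 lam0 ≤
      liftedEnergy X hX
        (lam1 - (max (ω * (liftedMinMarginal X i 1 h1 lam1 lam0
            - liftedMinMarginal X i 0 h0 lam1 lam0)) 0) • (Pi.single i 1 : Fin n → ℝ) + δ1)
        (lam0 - (max (-(ω * (liftedMinMarginal X i 1 h1 lam1 lam0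
            - liftedMinMarginal X i 0 h0 lam1 lam0))) 0) • (Pi.single i 1 : Fin n → ℝ) + δ0) := by
  set m1 := liftedMinMarginal X i 1 h1 lam1 lam0 with hm1
  set m0 := liftedMinMarginal X i 0 h0 lam1 lam0 with hm0
  set M := ω * (m1 - m0) with hM
  set P := max M 0 with hP
  set N := max (-M) 0 with hN
  set E := liftedEnergy X hX lam1 lam0 with hE
  set f : (Fin n → ℝ) → ℝ := fun x => ∑ k, (lam1 k * x k + lam0 k * (1 - x k)) with hf
  have hEm0 : E ≤ m0 := by
    obtain ⟨y, hy, hym⟩ := Finset.exists_mem_eq_inf' h0 f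
    have h' : m0 = f y := hym
    rw [h']
    exact Finset.inf'_le f (Finset.mem_filter.mp hy).1
  have hEm1 : E ≤ m1 := by
    obtain ⟨y, hy, hym⟩ := Finset.exists_mem_eq_inf' h1 f
    have h' : m1 = f y := hym
    rw [h']
    exact Finset.inf'_le f (Finset.mem_filter.mp hy).1
  have hPle : P ≤ m1 - E := by
    apply max_le _ (by linarith)
    nlinarith [mul_nonneg hω0 (sub_nonneg.2 hEm0),
      mul_nonneg (sub_nonneg.2 hω1) (sub_nonneg.2 hEm1)]
  have hNle : N ≤ m0 - E := by
    apply max_le _ (by linarith)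
    nlinarith [mul_nonneg hω0 (sub_nonneg.2 hEm1),
      mul_nonneg (sub_nonneg.2 hω1) (sub_nonneg.2 hEm0)]
  conv_rhs => rw [liftedEnergy]
  apply Finset.le_inf'
  intro x hx
  have hsum : ∑ k, ((lam1 - P • (Pi.single i 1 : Fin n → ℝ) + δ1) k * x k
        + (lam0 - N • (Pi.single i 1 : Fin n → ℝ) + δ0) k * (1 - x k))
      = f x + (∑ k, (δ1 k * x k + δ0 k * (1 - x k))) - (P * x i + N * (1 - x i)) := by
    rw [hf]
    rw [← Finset.sum_add_distrib]
    rw [show P * x i + N * (1 - x i)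
        = ∑ k, ((if k = i then P else 0) * x k + (if k = i then N else 0) * (1 - x k)) by
      simp [ite_mul, Finset.sum_add_distrib, Finset.sum_ite_eq']]
    rw [← Finset.sum_sub_distrib]
    apply Finset.sum_congr rfl
    intro k _
    simp only [Pi.add_apply, Pi.sub_apply, Pi.smul_apply, Pi.single_apply, smul_eq_mul]
    by_cases h : k = i <;> simp [h] <;> ring
  rw [hsum]
  have hδ : 0 ≤ ∑ k, (δ1 k * x k + δ0 k * (1 - x k)) := by
    apply Finset.sum_nonneg
    intro k _
    rcases hbin x hx k with h | h <;> rw [h] <;> nlinarith [hδ1 k, hδ0 k]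
  have hfx0 : x i = 0 → m0 ≤ f x := fun h =>
    Finset.inf'_le _ (Finset.mem_filter.mpr ⟨hx, h⟩)
  have hfx1 : x i = 1 → m1 ≤ f x := fun h =>
    Finset.inf'_le _ (Finset.mem_filter.mpr ⟨hx, h⟩)
  rcases hbin x hx i with h | h
  · have hm := hfx0 h
    rw [h]
    norm_num
    linarith
  · have hm := hfx1 h
    rw [h]
    norm_num
    linarith
end

section
/- Danskin-type directional derivative of the subproblem energy: let X ⊆ {0,1}^n be finite and nonempty and λ, d ∈ ℝ^n. Then the one-sided directional derivative of E_X at λ in direction d exists and equals the minimum of ⟨d, x⟩ over the set of minimizers of x ↦ ⟨λ, x⟩ over X; that is, lim_{t→0⁺} (E_X(λ + t·d) − E_X(λ))/t = min{⟨d, x⟩ : x ∈ X, ⟨λ, x⟩ = E_X(λ)}. -/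
open Finset

/-- Danskin-type directional derivative of the subproblem energy: the one-sided
directional derivative of `E_X` at `λ` in direction `d` equals the minimum of
`⟨d,·⟩` over the set of minimizers of `⟨λ,·⟩` over `X`. -/
theorem danskin_directional_derivative
    (n : ℕ) (X : Finset (Fin n → ℝ)) (hX : X.Nonempty)
    (hbin : ∀ x ∈ X, ∀ k, x k = 0 ∨ x k = 1)
    (lam d : Fin n → ℝ)
    (hargmin : (X.filter fun x =>
      (∑ k, lam k * x k) = X.inf' hX (fun x => ∑ k, lam k * x k)).Nonempty) :
    Filter.Tendsto
      (fun t : ℝ =>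
        ((X.inf' hX fun x => ∑ k, (lam k + t * d k) * x k)
          - (X.inf' hX fun x => ∑ k, lam k * x k)) / t)
      (nhdsWithin 0 (Set.Ioi 0))
      (nhds ((X.filter fun x =>
          (∑ k, lam k * x k) = X.inf' hX (fun x => ∑ k, lam k * x k)).inf' hargmin
        (fun x => ∑ k, d k * x k))) := by
  classical
  set f : (Fin n → ℝ) → ℝ := fun x => ∑ k, lam k * x k with hf
  set g : (Fin n → ℝ) → ℝ := fun x => ∑ k, d k * x k with hg
  set E : ℝ := X.inf' hX f with hE
  set A := X.filter (fun x => f x = E) with hA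
  set m : ℝ := A.inf' hargmin g with hm
  have hEle : ∀ x ∈ X, E ≤ f x := fun x hx => Finset.inf'_le f hx
  have hsum : ∀ t : ℝ, ∀ x : Fin n → ℝ,
      (∑ k, (lam k + t * d k) * x k) = f x + t * g x := by
    intro t x
    simp only [hf, hg, Finset.mul_sum]
    rw [← Finset.sum_add_distrib]
    congr 1; funext k; ring
  set B : ℝ := X.sup' hX (fun x => |g x|) with hB
  set C : ℝ := |m| + B + 1 with hC
  have hBnonneg : 0 ≤ B := by
    obtain ⟨x, hx⟩ := hX
    exact le_trans (abs_nonneg _) (Finset.le_sup' (fun x => |g x|) hx)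
  have hCpos : 0 < C := by positivity
  have hδ : ∃ δ > 0, ∀ x ∈ X, f x ≠ E → δ ≤ f x - E := by
    by_cases hS : (X.filter fun x => E < f x).Nonempty
    · refine ⟨(X.filter fun x => E < f x).inf' hS (fun x => f x - E), ?_, ?_⟩
      · obtain ⟨x, hxS, hx⟩ :=
          Finset.exists_mem_eq_inf' hS (fun x => f x - E)
        rw [hx]
        have := (Finset.mem_filter.mp hxS).2
        linarith
      · intro x hx hne
        have hxS : x ∈ X.filter (fun y => E < f y) :=
          Finset.mem_filter.mpr
            ⟨hx, lt_of_le_of_ne (hEle x hx) (fun h => hne h.symm)⟩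
        exact Finset.inf'_le (fun x => f x - E) hxS
    · refine ⟨1, one_pos, fun x hx hne => absurd ?_ hS⟩
      exact ⟨x, Finset.mem_filter.mpr
        ⟨hx, lt_of_le_of_ne (hEle x hx) (fun h => hne h.symm)⟩⟩
  obtain ⟨δ, hδpos, hδle⟩ := hδ
  have key : ∀ t : ℝ, 0 < t → t < δ / C →
      (X.inf' hX fun x => ∑ k, (lam k + t * d k) * x k) = E + t * m := by
    intro t ht htε
    apply le_antisymm
    · obtain ⟨x0, hx0A, hx0⟩ := Finset.exists_mem_eq_inf' hargmin g
      have hx0X : x0 ∈ X := (Finset.mem_filter.mp hx0A).1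
      have hx0E : f x0 = E := (Finset.mem_filter.mp hx0A).2
      calc X.inf' hX (fun x => ∑ k, (lam k + t * d k) * x k)
          ≤ ∑ k, (lam k + t * d k) * x0 k := Finset.inf'_le _ hx0X
        _ = f x0 + t * g x0 := hsum t x0
        _ = E + t * m := by rw [hx0E, ← hx0]
    · apply Finset.le_inf'
      intro x hx
      rw [hsum t x]
      by_cases hxE : f x = E
      · have hxA : x ∈ A := Finset.mem_filter.mpr ⟨hx, hxE⟩
        have h1 : m ≤ g x := Finset.inf'_le g hxA
        have h2 : t * m ≤ t * g x := mul_le_mul_of_nonneg_left h1 ht.le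
        linarith
      · have h1 : δ ≤ f x - E := hδle x hx hxE
        have h2 : |g x| ≤ B := Finset.le_sup' (fun x => |g x|) hx
        have h3 : m - g x ≤ C := by
          have h4 : m ≤ |m| := le_abs_self m
          have h5 : -(g x) ≤ |g x| := neg_le_abs _
          rw [hC]; linarith
        have h6 : t * C < δ := (lt_div_iff₀ hCpos).mp htε
        have h7 : t * (m - g x) ≤ t * C := mul_le_mul_of_nonneg_left h3 ht.le
        have h8 : t * (m - g x) < f x - E := lt_of_le_of_lt h7 (lt_of_lt_of_le h6 h1)
        rw [mul_sub] at h8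
        linarith
  have hεpos : 0 < δ / C := by positivity
  have hev : (fun t : ℝ =>
      ((X.inf' hX fun x => ∑ k, (lam k + t * d k) * x k) - E) / t)
      =ᶠ[nhdsWithin 0 (Set.Ioi 0)] (fun _ => m) := by
    filter_upwards [Ioo_mem_nhdsGT_of_mem
      (show (0:ℝ) ∈ Set.Ico 0 (δ / C) from ⟨le_refl 0, hεpos⟩)] with t ht
    rw [key t ht.1 ht.2, add_sub_cancel_left, mul_comm, mul_div_assoc,
      div_self (ne_of_gt ht.1), mul_one]
  exact Filter.Tendsto.congr' hev.symm tendsto_const_nhds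
end
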